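/- arXiv:1910.08174 — 2 statements merged into one kernel-verified Lean document; each statement's English description precedes it below -/
import Mathlib

section
/- Assume in addition that L is injective, so that L^{-1} : range(L) → X exists (note Π_r^Y maps into Y_r ⊂ range(L), so L^{-1}Π_r^Y LK is well defined). Then for every r with σ_r > 0, ‖K − L^{-1}Π_r^Y LK‖²_{HS(S,X)} = Σ_{r < k ≤ s_X} σ_k² ‖φ_k − L^{-1}Π_r^Y Lφ_k‖²_X. If s_X = ∞, this quantity tends to 0 as r → ∞ provided either (i) L^{-1} is bounded and sup_r ‖Π_r^Y‖ < ∞, or (ii) the operators L^{-1}Π_r^Y L are uniformly bounded in operator norm. -/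
open Filter Topology

/-!
Write `Q_r = L⁻¹ Π_r^Y L`. Since `K f_k = σ_k φ_k` and `Q_r` fixes `φ_k` for `k < r`, the
Hilbert–Schmidt sum of `K - Q_r K` over the basis `f` loses its first `r` terms and equals the
stated tail. For convergence it suffices, by Tannery's theorem, to dominate the `k`-th term
uniformly in `r` by a summable sequence, since each term vanishes once `r > k`.
In case (i), `‖x - Q_r x‖ ≤ C ‖L x - Π_r^Y L x‖ ≤ C (1 + C') ‖L x‖`, dominated by the
Hilbert–Schmidt norm of `LK`. In case (ii), the ranges of the `Π_r^Y` increase, so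
`Q_r Q_{r₀} = Q_{r₀}` for `r₀ ≤ r`, whence `x - Q_r x = (1 - Q_r)(x - Q_{r₀} x)` and the error
for `r` is at most `(1 + C)²` times the error for `r₀`.
-/

theorem tsum_eq_tsum_add_of_forall_lt_eq_zero {M : Type*} [AddCommMonoid M] [TopologicalSpace M]
    {a : ℕ → M} (r : ℕ) (h : ∀ k < r, a k = 0) : ∑' k, a k = ∑' k, a (r + k) := by
  refine ((add_right_injective r).tsum_eq fun k hk => ?_).symm
  exact ⟨k - r, Nat.add_sub_cancel' (not_lt.mp fun hkr => hk (h k hkr))⟩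

theorem tendsto_tsum_of_forall_lt_eq_zero {G : Type*} [NormedAddCommGroup G] [CompleteSpace G]
    {a : ℕ → ℕ → G} (h : ∀ r, ∀ k < r, a r k = 0) {bound : ℕ → ℝ} (h_sum : Summable bound)
    (h_bound : ∀ᶠ r in atTop, ∀ k, ‖a r k‖ ≤ bound k) :
    Tendsto (fun r => ∑' k, a r k) atTop (𝓝 0) := by
  have hlim : ∀ k, Tendsto (a · k) atTop (𝓝 0) := fun k =>
    tendsto_const_nhds.congr' <| (eventually_gt_atTop k).mono fun r hr => (h r k hr).symm
  simpa using tendsto_tsum_of_dominated_convergence h_sum hlim h_bound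

theorem HilbertBasis.apply_eq_smul_of_eq_tsum {𝕜 S X : Type*} [RCLike 𝕜]
    [NormedAddCommGroup S] [InnerProductSpace 𝕜 S] [AddCommGroup X] [Module 𝕜 X]
    [TopologicalSpace X] (f : HilbertBasis ℕ 𝕜 S) {K : S → X} {σ : ℕ → ℝ} {φ : ℕ → X}
    (hK : ∀ g, K g = ∑' j, ((σ j : 𝕜) * inner 𝕜 (f j) g) • φ j) (k : ℕ) :
    K (f k) = (σ k : 𝕜) • φ k := by
  rw [hK, tsum_eq_single k fun j hj => by rw [f.orthonormal.2 hj, mul_zero, zero_smul],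
    inner_self_eq_norm_sq_to_K, f.orthonormal.1 k]
  simp

theorem Submodule.span_image_le_map {R M N ι : Type*} [Semiring R] [AddCommMonoid M]
    [Module R M] [AddCommMonoid N] [Module R N] {D : Submodule R M} (L : M →ₗ[R] N)
    {φ : ι → M} {s : Set ι} (h : ∀ k ∈ s, φ k ∈ D) :
    span R ((fun k => L (φ k)) '' s) ≤ D.map L :=
  span_le.mpr <| by
    rintro _ ⟨k, hk, rfl⟩
    exact mem_map_of_mem (h k hk)

section LeftInverse

variable {𝕜 X Y : Type*} [NontriviallyNormedField 𝕜]
  [NormedAddCommGroup X] [NormedSpace 𝕜 X] [NormedAddCommGroup Y] [NormedSpace 𝕜 Y]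
  {D : Submodule 𝕜 X} {L : X →ₗ[𝕜] Y} {Linv : Y →ₗ[𝕜] X}

theorem norm_sub_leftInv_comp_le (hLinv : ∀ x ∈ D, Linv (L x) = x) {P : Y →L[𝕜] Y}
    (hP : ∀ y, P y ∈ D.map L) {C : ℝ} (hC0 : 0 ≤ C) (hC : ∀ x ∈ D, ‖x‖ ≤ C * ‖L x‖)
    {x : X} (hx : x ∈ D) : ‖x - Linv (P (L x))‖ ≤ C * (1 + ‖P‖) * ‖L x‖ := by
  obtain ⟨z, hz, hLz⟩ := Submodule.mem_map.mp (hP (L x))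
  rw [← hLz, hLinv z hz]
  calc ‖x - z‖ ≤ C * ‖L x - P (L x)‖ := by simpa [hLz] using hC _ (D.sub_mem hx hz)
    _ ≤ C * (‖L x‖ + ‖P‖ * ‖L x‖) := by gcongr; exact norm_sub_le_of_le le_rfl (P.le_opNorm _)
    _ = C * (1 + ‖P‖) * ‖L x‖ := by ring

theorem norm_sub_leftInv_comp_le_of_comp_eq (hLinv : ∀ x ∈ D, Linv (L x) = x)
    {P P₀ : Y →ₗ[𝕜] Y} (hP₀ : ∀ y, P₀ y ∈ D.map L) (hPP₀ : ∀ y, P (P₀ y) = P₀ y) {C : ℝ}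
    (hC : ∀ x ∈ D, ‖Linv (P (L x))‖ ≤ C * ‖x‖) {x : X} (hx : x ∈ D) :
    ‖x - Linv (P (L x))‖ ≤ (1 + C) * ‖x - Linv (P₀ (L x))‖ := by
  obtain ⟨z, hz, hLz⟩ := Submodule.mem_map.mp (hP₀ (L x))
  have hu : x - Linv (P (L x)) = (x - z) - Linv (P (L (x - z))) := by
    rw [map_sub L, hLz, map_sub, hPP₀, ← hLz, map_sub, hLinv z hz]
    abel
  rw [hu, ← hLz, hLinv z hz]
  calc ‖(x - z) - Linv (P (L (x - z)))‖ ≤ ‖x - z‖ + C * ‖x - z‖ :=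
        norm_sub_le_of_le le_rfl (hC _ (D.sub_mem hx hz))
    _ = (1 + C) * ‖x - z‖ := by ring

variable {x : ℕ → X}

theorem tendsto_tsum_norm_sub_leftInv_comp_sq_of_bounded (hLinv : ∀ x ∈ D, Linv (L x) = x)
    {P : ℕ → Y →L[𝕜] Y} (hP : ∀ r y, P r y ∈ D.map L) (hx : ∀ k, x k ∈ D)
    (hfix : ∀ r, ∀ k < r, Linv (P r (L (x k))) = x k)
    (hsum : Summable fun k => ‖L (x k)‖ ^ 2) {C C' : ℝ} (hC : ∀ x ∈ D, ‖x‖ ≤ C * ‖L x‖)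
    (hC' : ∀ r, ‖P r‖ ≤ C') :
    Tendsto (fun r => ∑' k, ‖x k - Linv (P r (L (x k)))‖ ^ 2) atTop (𝓝 0) := by
  set C₀ := max C 0
  have hC₀ : ∀ x ∈ D, ‖x‖ ≤ C₀ * ‖L x‖ := fun x hx =>
    (hC x hx).trans (by gcongr; exact le_max_left C 0)
  refine tendsto_tsum_of_forall_lt_eq_zero (fun r k hk => by simp [hfix r k hk])
    (hsum.mul_left ((C₀ * (1 + C')) ^ 2)) (.of_forall fun r k => ?_)
  rw [norm_pow, norm_norm, ← mul_pow]
  refine pow_le_pow_left₀ (norm_nonneg _) ?_ 2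
  exact (norm_sub_leftInv_comp_le hLinv (hP r) (le_max_right C 0) hC₀ (hx k)).trans
    (by gcongr; exact hC' r)

theorem tendsto_tsum_norm_sub_leftInv_comp_sq_of_uniformly_bounded
    (hLinv : ∀ x ∈ D, Linv (L x) = x) {P : ℕ → Y →ₗ[𝕜] Y} (hP : ∀ r y, P r y ∈ D.map L)
    (hPP : ∀ r₀ r, r₀ ≤ r → ∀ y, P r (P r₀ y) = P r₀ y) (hx : ∀ k, x k ∈ D)
    (hfix : ∀ r, ∀ k < r, Linv (P r (L (x k))) = x k) {C : ℝ}
    (hC : ∀ r, ∀ x ∈ D, ‖Linv (P r (L x))‖ ≤ C * ‖x‖) :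
    Tendsto (fun r => ∑' k, ‖x k - Linv (P r (L (x k)))‖ ^ 2) atTop (𝓝 0) := by
  by_cases hsum : ∃ r₀, Summable fun k => ‖x k - Linv (P r₀ (L (x k)))‖ ^ 2
  · obtain ⟨r₀, hr₀⟩ := hsum
    refine tendsto_tsum_of_forall_lt_eq_zero (fun r k hk => by simp [hfix r k hk])
      (hr₀.mul_left ((1 + C) ^ 2)) ((eventually_ge_atTop r₀).mono fun r hr k => ?_)
    rw [norm_pow, norm_norm, ← mul_pow]
    exact pow_le_pow_left₀ (norm_nonneg _)
      (norm_sub_leftInv_comp_le_of_comp_eq hLinv (hP r₀) (hPP r₀ r hr) (hC r) (hx k)) 2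
  · -- every sum then takes the junk value `0`
    push Not at hsum
    simp only [tsum_eq_zero_of_not_summable (hsum _), tendsto_const_nhds]

end LeftInverse

theorem stmt3_general
    {𝕜 : Type*} [RCLike 𝕜]
    {S X Y : Type*}
    [NormedAddCommGroup S] [InnerProductSpace 𝕜 S]
    [NormedAddCommGroup X] [InnerProductSpace 𝕜 X]
    [NormedAddCommGroup Y] [InnerProductSpace 𝕜 Y]
    (K : S →L[𝕜] X)
    (σ : ℕ → ℝ)
    (f : HilbertBasis ℕ 𝕜 S) (φ : ℕ → X)
    (hSVD : ∀ g : S, K g = ∑' k, ((σ k : 𝕜) * (inner 𝕜 (f k) g : 𝕜)) • φ k)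
    (sX : ℕ∞) (hsX : ∀ k, 0 < σ k ↔ (k : ℕ∞) < sX)
    (D : Submodule 𝕜 X) (L : X →ₗ[𝕜] Y)
    (hKD : ∀ g : S, K g ∈ D)
    (hφD : ∀ k, 0 < σ k → φ k ∈ D)
    (hHS : Summable fun k => ‖L (K (f k))‖ ^ 2)
    (Linv : Y →ₗ[𝕜] X) (hLinv : ∀ x ∈ D, Linv (L x) = x)
    (P : ℕ → Y →L[𝕜] Y)
    (hPfix : ∀ r, (∀ k < r, 0 < σ k) → ∀ k < r, P r (L (φ k)) = L (φ k))
    (hPrange : ∀ r, (∀ k < r, 0 < σ k) → ∀ y : Y,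
      P r y ∈ Submodule.span 𝕜 ((fun k => L (φ k)) '' Set.Iio r)) :
    (∀ r, (∀ k < r, 0 < σ k) →
      ∑' k, ‖K (f k) - Linv (P r (L (K (f k))))‖ ^ 2
        = ∑' k, σ (r + k) ^ 2 * ‖φ (r + k) - Linv (P r (L (φ (r + k))))‖ ^ 2)
    ∧ (sX = ⊤ →
        ((∃ C, ∀ x ∈ D, ‖x‖ ≤ C * ‖L x‖) ∧ (∃ C, ∀ r, ‖P r‖ ≤ C)
          ∨ (∃ C, ∀ r, ∀ x ∈ D, ‖Linv (P r (L x))‖ ≤ C * ‖x‖)) →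
        Tendsto (fun r => ∑' k, ‖K (f k) - Linv (P r (L (K (f k))))‖ ^ 2)
          atTop (nhds 0)) := by
  have hKf : ∀ k, K (f k) = (σ k : 𝕜) • φ k := f.apply_eq_smul_of_eq_tsum hSVD
  have hP : ∀ r, (∀ k < r, 0 < σ k) → ∀ y, P r y ∈ D.map L := fun r hr y =>
    Submodule.span_image_le_map L (fun k hk => hφD k (hr k hk)) (hPrange r hr y)
  have hfix : ∀ r, (∀ k < r, 0 < σ k) → ∀ k < r, Linv (P r (L (K (f k)))) = K (f k) := by
    intro r hr k hk
    rw [hKf, map_smul, map_smul, map_smul, hPfix r hr k hk, hLinv _ (hφD k (hr k hk))]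
  refine ⟨fun r hr => ?_, fun htop hcond => ?_⟩
  · rw [tsum_eq_tsum_add_of_forall_lt_eq_zero r fun k hk => by simp [hfix r hr k hk]]
    refine tsum_congr fun k => ?_
    rw [hKf, map_smul, map_smul, map_smul, ← smul_sub, norm_smul, mul_pow, RCLike.norm_ofReal,
      sq_abs]
  have hpos : ∀ r, ∀ k < r, 0 < σ k := fun _ k _ => (hsX k).mpr (htop ▸ ENat.natCast_lt_top k)
  have hPP : ∀ r₀ r, r₀ ≤ r → ∀ y, P r (P r₀ y) = P r₀ y := fun r₀ r hr y =>
    LinearMap.eqOn_span' (f := (P r : Y →ₗ[𝕜] Y)) (g := .id)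
      (by rintro _ ⟨k, hk, rfl⟩; exact hPfix r (hpos r) k hk)
      (Submodule.span_mono (Set.image_mono (Set.Iio_subset_Iio hr)) (hPrange r₀ (hpos r₀) y))
  rcases hcond with ⟨⟨C, hC⟩, C', hC'⟩ | ⟨C, hC⟩
  · exact tendsto_tsum_norm_sub_leftInv_comp_sq_of_bounded hLinv (fun r => hP r (hpos r))
      (fun k => hKD (f k)) (fun r => hfix r (hpos r)) hHS hC hC'
  · exact tendsto_tsum_norm_sub_leftInv_comp_sq_of_uniformly_bounded (P := fun r => P r) hLinv
      (fun r => hP r (hpos r)) hPP (fun k => hKD (f k)) (fun r => hfix r (hpos r)) hC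

/-- Same SVD/POD setting as Statement 2 (0-based indexing), with
`L` injective on its domain `D = D(L)` (encoded via a linear left inverse
`Linv` of `L` on `D`, which represents `L⁻¹ : range L → X`; since `Π_r^Y` maps
into `Y_r = span{Lφ_k : k < r} ⊆ L(D)`, the expression `Linv (P r (L x))`
represents `L⁻¹ Π_r^Y L x`).  Conclusion: the exact Hilbert–Schmidt error
formula `‖K − L⁻¹Π_r^Y L K‖²_HS = Σ_{r<k≤s_X} σ_k² ‖φ_k − L⁻¹Π_r^Y Lφ_k‖²`, and
for `s_X = ∞` the convergence of this error to `0` provided either (i) `L⁻¹` is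
bounded and `sup_r ‖Π_r^Y‖ < ∞`, or (ii) the operators `L⁻¹Π_r^Y L` are
uniformly bounded. -/
theorem stmt3
    {𝕜 : Type*} [RCLike 𝕜]
    {S X Y : Type*}
    [NormedAddCommGroup S] [InnerProductSpace 𝕜 S] [CompleteSpace S] [SecondCountableTopology S]
    [NormedAddCommGroup X] [InnerProductSpace 𝕜 X] [CompleteSpace X] [SecondCountableTopology X]
    [NormedAddCommGroup Y] [InnerProductSpace 𝕜 Y] [CompleteSpace Y] [SecondCountableTopology Y]
    (K : S →L[𝕜] X) (hKcpt : IsCompactOperator K)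
    (σ : ℕ → ℝ) (hσmono : Antitone σ) (hσnn : ∀ k, 0 ≤ σ k)
    (f : HilbertBasis ℕ 𝕜 S) (φ : ℕ → X)
    (hφON : ∀ j k, 0 < σ j → 0 < σ k →
      (inner 𝕜 (φ j) (φ k) : 𝕜) = if j = k then 1 else 0)
    (hSVD : ∀ g : S, K g = ∑' k, ((σ k : 𝕜) * (inner 𝕜 (f k) g : 𝕜)) • φ k)
    (hKf : ∀ k, 0 < σ k → K (f k) = (σ k : 𝕜) • φ k)
    (hKadj : ∀ k, 0 < σ k →
      ContinuousLinearMap.adjoint K (φ k) = (σ k : 𝕜) • (f k : S))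
    (sX : ℕ∞) (hsX : ∀ k, 0 < σ k ↔ (k : ℕ∞) < sX)
    (D : Submodule 𝕜 X) (L : X →ₗ[𝕜] Y)
    (hKD : ∀ g : S, K g ∈ D)
    (hφD : ∀ k, 0 < σ k → φ k ∈ D)
    (hHS : Summable fun k => ‖L (K (f k))‖ ^ 2)
    (Linv : Y →ₗ[𝕜] X) (hLinv : ∀ x ∈ D, Linv (L x) = x)
    (P : ℕ → Y →L[𝕜] Y)
    (hPfix : ∀ r, (∀ k < r, 0 < σ k) → ∀ k < r, P r (L (φ k)) = L (φ k))
    (hPrange : ∀ r, (∀ k < r, 0 < σ k) → ∀ y : Y,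
      P r y ∈ Submodule.span 𝕜 ((fun k => L (φ k)) '' Set.Iio r)) :
    (∀ r, (∀ k < r, 0 < σ k) →
      ∑' k, ‖K (f k) - Linv (P r (L (K (f k))))‖ ^ 2
        = ∑' k, σ (r + k) ^ 2 * ‖φ (r + k) - Linv (P r (L (φ (r + k))))‖ ^ 2)
    ∧ (sX = ⊤ →
        ((∃ C, ∀ x ∈ D, ‖x‖ ≤ C * ‖L x‖) ∧ (∃ C, ∀ r, ‖P r‖ ≤ C)
          ∨ (∃ C, ∀ r, ∀ x ∈ D, ‖Linv (P r (L x))‖ ≤ C * ‖x‖)) →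
        Tendsto (fun r => ∑' k, ‖K (f k) - Linv (P r (L (K (f k))))‖ ^ 2)
          atTop (nhds 0)) :=
  stmt3_general K σ f φ hSVD sX hsX D L hKD hφD hHS Linv hLinv P hPfix hPrange
end

section
/- If in addition L is injective (so L^{-1} : range(L) → X exists, and L^{-1}Π_r^Y Lw_j is well defined since Π_r^Y maps into Y_r ⊂ range(L)), then for every r with σ_r > 0, Σ_{j=1}^s γ_j ‖w_j − L^{-1}Π_r^Y Lw_j‖²_X = Σ_{k=r+1}^{s_X} σ_k² ‖φ_k − L^{-1}Π_r^Y Lφ_k‖²_X. -/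
/-!
Put `T = id - L⁻¹ Π_r^Y L`. Both sides are the sum `∑ ‖(T ∘ K) e‖²` over an orthonormal basis `e`
of `S`: the rescaled coordinate basis `γ_j^{-1/2} b_j`, which `K` maps to `γ_j^{1/2} w_j`, on the
left, and the right singular basis `f_k`, which `K` maps to `σ_k φ_k`, on the right. This sum does
not depend on the basis, being `re tr ((T K)* (T K))`. Finally `T φ_k = 0` for `k < r`, because
`Π_r^Y` fixes `L φ_k` and `L⁻¹` undoes `L` on `D(L)`.
-/

open scoped InnerProductSpace

section

variable {𝕜 E F ι ι' : Type*} [RCLike 𝕜] [NormedAddCommGroup E] [InnerProductSpace 𝕜 E]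
  [NormedAddCommGroup F] [InnerProductSpace 𝕜 F]

lemma orthonormal_inv_sqrt_smul [DecidableEq ι] {v : ι → E} {γ : ι → ℝ} (hγ : ∀ i, 0 < γ i)
    (hv : ∀ i j, ⟪v i, v j⟫_𝕜 = if i = j then (γ i : 𝕜) else 0) :
    Orthonormal 𝕜 fun i => ((√(γ i))⁻¹ : 𝕜) • v i := by
  rw [orthonormal_iff_ite]
  intro i j
  rw [inner_smul_left, inner_smul_right, hv]
  split_ifs with h
  · subst h
    have hs : (√(γ i) : 𝕜) ≠ 0 := by exact_mod_cast (Real.sqrt_pos.2 (hγ i)).ne'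
    have hγs : (γ i : 𝕜) = (√(γ i) : 𝕜) * √(γ i) := by
      exact_mod_cast (Real.mul_self_sqrt (hγ i).le).symm
    rw [map_inv₀, RCLike.conj_ofReal, hγs]
    field_simp
  · simp

lemma Module.Basis.inner_eq_ite_of_inner_eq_sum [Fintype ι] [DecidableEq ι]
    (b : Module.Basis ι 𝕜 E) (γ : ι → ℝ)
    (hinner : ∀ u v : E, ⟪u, v⟫_𝕜 =
      ∑ j, (γ j : 𝕜) * (starRingEnd 𝕜) (b.repr u j) * (b.repr v j)) (i j : ι) :
    ⟪b i, b j⟫_𝕜 = if i = j then (γ i : 𝕜) else 0 := by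
  rw [hinner]
  simp only [Module.Basis.repr_self, Finsupp.single_apply, apply_ite (starRingEnd 𝕜), map_one,
    map_zero, mul_ite, mul_one, mul_zero, Finset.sum_ite_eq, Finset.mem_univ, if_true]
  split_ifs with h
  · rw [h]
  · rfl

variable [Fintype ι] [Fintype ι']

lemma LinearMap.sum_norm_sq_apply_eq_re_trace [FiniteDimensional 𝕜 E] (A : E →ₗ[𝕜] F)
    (b : OrthonormalBasis ι 𝕜 E) :
    ∑ i, ‖A (b i)‖ ^ 2 = RCLike.re ((A.rangeRestrict.adjoint ∘ₗ A.rangeRestrict).trace 𝕜 E) := by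
  rw [LinearMap.trace_eq_sum_inner _ b, map_sum]
  refine Finset.sum_congr rfl fun i _ => ?_
  rw [LinearMap.comp_apply, LinearMap.adjoint_inner_right, inner_self_eq_norm_sq]
  rfl

lemma LinearMap.sum_norm_sq_apply_orthonormalBasis_eq (A : E →ₗ[𝕜] F)
    (b : OrthonormalBasis ι 𝕜 E) (b' : OrthonormalBasis ι' 𝕜 E) :
    ∑ i, ‖A (b i)‖ ^ 2 = ∑ i, ‖A (b' i)‖ ^ 2 := by
  have := b.toBasis.finiteDimensional_of_finite
  rw [A.sum_norm_sq_apply_eq_re_trace b, A.sum_norm_sq_apply_eq_re_trace b']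

theorem sum_weight_mul_norm_sq_eq_sum_sq_mul_norm_sq [DecidableEq ι]
    (T : F →ₗ[𝕜] F) (K : E →ₗ[𝕜] F) (b : Module.Basis ι 𝕜 E) {γ : ι → ℝ} (hγ : ∀ i, 0 < γ i)
    (hb : ∀ i j, ⟪b i, b j⟫_𝕜 = if i = j then (γ i : 𝕜) else 0)
    {w : ι → F} (hKb : ∀ j, K (b j) = (γ j : 𝕜) • w j)
    (f : OrthonormalBasis ι' 𝕜 E) {σ : ι' → ℝ} {φ : ι' → F}
    (hKf : ∀ k, K (f k) = (σ k : 𝕜) • φ k) :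
    ∑ j, γ j * ‖T (w j)‖ ^ 2 = ∑ k, σ k ^ 2 * ‖T (φ k)‖ ^ 2 := by
  have hunit : ∀ j, IsUnit ((√(γ j))⁻¹ : 𝕜) := fun j => by
    simpa using (Real.sqrt_pos.2 (hγ j)).ne'
  let c := (b.isUnitSMul hunit).toOrthonormalBasis (by
    convert orthonormal_inv_sqrt_smul hγ hb using 1
    exact funext (Module.Basis.isUnitSMul_apply hunit))
  have hc : ∀ j, ‖(T ∘ₗ K) (c j)‖ ^ 2 = γ j * ‖T (w j)‖ ^ 2 := fun j => by
    have hγs : (γ j : 𝕜) = (√(γ j) : 𝕜) * √(γ j) := by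
      exact_mod_cast (Real.mul_self_sqrt (hγ j).le).symm
    have hs : (√(γ j) : 𝕜) ≠ 0 := by exact_mod_cast (Real.sqrt_pos.2 (hγ j)).ne'
    rw [Module.Basis.coe_toOrthonormalBasis, Module.Basis.isUnitSMul_apply, LinearMap.comp_apply,
      map_smul, hKb, smul_smul, hγs, inv_mul_cancel_left₀ hs, map_smul, norm_smul, mul_pow,
      RCLike.norm_ofReal, sq_abs, Real.sq_sqrt (hγ j).le]
  have hf : ∀ k, ‖(T ∘ₗ K) (f k)‖ ^ 2 = σ k ^ 2 * ‖T (φ k)‖ ^ 2 := fun k => by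
    rw [LinearMap.comp_apply, hKf, map_smul, norm_smul, mul_pow, RCLike.norm_ofReal, sq_abs]
  simp only [← hc, ← hf]
  exact (T ∘ₗ K).sum_norm_sq_apply_orthonormalBasis_eq c f

end

theorem stmt8_general
    {𝕜 : Type*} [RCLike 𝕜]
    {X Y S : Type*}
    [NormedAddCommGroup X] [InnerProductSpace 𝕜 X]
    [NormedAddCommGroup Y] [InnerProductSpace 𝕜 Y]
    [NormedAddCommGroup S] [InnerProductSpace 𝕜 S]
    (s : ℕ)
    (b : Module.Basis (Fin s) 𝕜 S)
    (γ : Fin s → ℝ) (hγ : ∀ j, 0 < γ j)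
    (hinner : ∀ u v : S, (inner 𝕜 u v : 𝕜) =
      ∑ j, (γ j : 𝕜) * (starRingEnd 𝕜) (b.repr u j) * (b.repr v j))
    (w : Fin s → X)
    (K : S →L[𝕜] X)
    (hK : ∀ g : S, K g = ∑ j, ((γ j : 𝕜) * (b.repr g j)) • w j)
    (σ : ℕ → ℝ)
    (f : OrthonormalBasis (Fin s) 𝕜 S)
    (φ : ℕ → X)
    (hSVD : ∀ g : S, K g = ∑ k : Fin s, ((σ (k : ℕ) : 𝕜) * (inner 𝕜 (f k) g : 𝕜)) • φ (k : ℕ))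
    (D : Submodule 𝕜 X) (L : X →ₗ[𝕜] Y)
    (hφD : ∀ k, 0 < σ k → φ k ∈ D)
    (Linv : Y →ₗ[𝕜] X) (hLinv : ∀ x ∈ D, Linv (L x) = x)
    (r : ℕ) (hr : ∀ k < r, 0 < σ k)
    (P : Y →L[𝕜] Y)
    (hPfix : ∀ k < r, P (L (φ k)) = L (φ k)) :
    ∑ j, γ j * ‖w j - Linv (P (L (w j)))‖ ^ 2
      = ∑ k : Fin s, if r ≤ (k : ℕ) then
          σ (k : ℕ) ^ 2 * ‖φ (k : ℕ) - Linv (P (L (φ (k : ℕ))))‖ ^ 2 else 0 := by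
  let T : X →ₗ[𝕜] X := LinearMap.id - Linv ∘ₗ (P : Y →ₗ[𝕜] Y) ∘ₗ L
  have hKb : ∀ j, K (b j) = (γ j : 𝕜) • w j := fun j => by
    simp [hK, Module.Basis.repr_self, Finsupp.single_apply]
  have hKf : ∀ k : Fin s, K (f k) = (σ k : 𝕜) • φ k := fun k => by
    simp [hSVD, f.inner_eq_ite]
  have hTφ : ∀ k < r, T (φ k) = 0 := fun k hk => by
    simp [T, hPfix k hk, hLinv _ (hφD k (hr k hk))]
  have key := sum_weight_mul_norm_sq_eq_sum_sq_mul_norm_sq T K b hγ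
    (b.inner_eq_ite_of_inner_eq_sum γ hinner) hKb f hKf
  refine key.trans (Finset.sum_congr rfl fun k _ => ?_)
  split_ifs with hk
  · rfl
  · simp [hTφ k (not_le.1 hk)]

/-- Discrete POD setting as in Statement 7, with `L` injective
on its domain `D = D(L)` (so `L⁻¹ : range L → X` exists; it is encoded by a
linear left inverse `Linv` of `L` on `D`, and `L⁻¹Π_r^Y L w_j` is well defined
because `Π_r^Y` maps into `Y_r = span{Lφ_k : k < r} ⊆ L(D)`).  Conclusion:
`Σ_j γ_j ‖w_j − L⁻¹Π_r^Y L w_j‖²_X = Σ_{k=r+1}^{s_X} σ_k² ‖φ_k − L⁻¹Π_r^Y Lφ_k‖²_X`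
(0-based indexing, trailing `σ_k = 0` terms vanishing). -/
theorem stmt8
    {𝕜 : Type*} [RCLike 𝕜]
    {X Y S : Type*}
    [NormedAddCommGroup X] [InnerProductSpace 𝕜 X] [CompleteSpace X] [SecondCountableTopology X]
    [NormedAddCommGroup Y] [InnerProductSpace 𝕜 Y] [CompleteSpace Y] [SecondCountableTopology Y]
    [NormedAddCommGroup S] [InnerProductSpace 𝕜 S] [CompleteSpace S]
    (s : ℕ) (hs : 0 < s)
    (b : Module.Basis (Fin s) 𝕜 S)
    (γ : Fin s → ℝ) (hγ : ∀ j, 0 < γ j)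
    (hinner : ∀ u v : S, (inner 𝕜 u v : 𝕜) =
      ∑ j, (γ j : 𝕜) * (starRingEnd 𝕜) (b.repr u j) * (b.repr v j))
    (w : Fin s → X)
    (K : S →L[𝕜] X)
    (hK : ∀ g : S, K g = ∑ j, ((γ j : 𝕜) * (b.repr g j)) • w j)
    (σ : ℕ → ℝ) (hσmono : Antitone σ) (hσnn : ∀ k, 0 ≤ σ k)
    (hσs : ∀ k, s ≤ k → σ k = 0)
    (f : OrthonormalBasis (Fin s) 𝕜 S)
    (φ : ℕ → X)
    (hφON : ∀ j k, 0 < σ j → 0 < σ k →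
      (inner 𝕜 (φ j) (φ k) : 𝕜) = if j = k then 1 else 0)
    (hSVD : ∀ g : S, K g = ∑ k : Fin s, ((σ (k : ℕ) : 𝕜) * (inner 𝕜 (f k) g : 𝕜)) • φ (k : ℕ))
    (hKf : ∀ k : Fin s, 0 < σ (k : ℕ) → K (f k) = (σ (k : ℕ) : 𝕜) • φ (k : ℕ))
    (hKadj : ∀ k : Fin s, 0 < σ (k : ℕ) →
      ContinuousLinearMap.adjoint K (φ (k : ℕ)) = (σ (k : ℕ) : 𝕜) • f k)
    (sX : ℕ) (hsX : ∀ k, 0 < σ k ↔ k < sX)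
    (D : Submodule 𝕜 X) (L : X →ₗ[𝕜] Y)
    (hwD : ∀ j, w j ∈ D)
    (hφD : ∀ k, 0 < σ k → φ k ∈ D)
    (Linv : Y →ₗ[𝕜] X) (hLinv : ∀ x ∈ D, Linv (L x) = x)
    (r : ℕ) (hr : ∀ k < r, 0 < σ k)
    (P : Y →L[𝕜] Y)
    (hPfix : ∀ k < r, P (L (φ k)) = L (φ k))
    (hPrange : ∀ y : Y, P y ∈ Submodule.span 𝕜 ((fun k => L (φ k)) '' Set.Iio r)) :
    ∑ j, γ j * ‖w j - Linv (P (L (w j)))‖ ^ 2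
      = ∑ k : Fin s, if r ≤ (k : ℕ) then
          σ (k : ℕ) ^ 2 * ‖φ (k : ℕ) - Linv (P (L (φ (k : ℕ))))‖ ^ 2 else 0 :=
  stmt8_general s b γ hγ hinner w K hK σ f φ hSVD D L hφD Linv hLinv r hr P hPfix
end
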